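/- arXiv:1907.07811 — 3 statements merged into one kernel-verified Lean document; each statement's English description precedes it below -/
import Mathlib

section
/- Let A ∈ ℝ^{m×n}, b ∈ ℝ^m. If the only λ ∈ ℝ^m satisfying λ ≥ 0, Aᵀλ ≥ 0, bᵀλ ≤ 0 is λ = 0, then the primal system Ax ≤ b, x ≥ 0 has a solution with all inequalities strict (it is solvable and full-dimensional). -/
/-!
Homogenize: `x / t` is a strict solution whenever `x > 0`, `t > 0` and `A x < t b`, i.e.
whenever `H (x, t) > 0` for the matrix `H` stacking the rows `(-Aᵢ, bᵢ)` on top of the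
identity. By Gordan's theorem such a vector exists unless
`yᵀ H = 0` for some nonzero `y ≥ 0`. Splitting `y = (λ, μ)`, that equation says
`Aᵀλ = μ_x ≥ 0` and `bᵀλ = -μ_t ≤ 0`, so the hypothesis forces `λ = 0` and then `μ = 0`.

Gordan's theorem itself comes from separating `0` from the compact convex set
`{yᵀ M | y in the standard simplex}`.
-/

open Matrix

section Gordan

variable {ι κ : Type*} [Fintype ι] [Fintype κ]

theorem LinearMap.apply_eq_dotProduct_single [DecidableEq κ] (f : (κ → ℝ) →ₗ[ℝ] ℝ)
    (v : κ → ℝ) : f v = v ⬝ᵥ fun k => f (Pi.single k 1) := by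
  conv_lhs => rw [pi_eq_sum_univ' v]
  simp [dotProduct, map_sum]

theorem Matrix.exists_mulVec_pos_of_vecMul_eq_zero (M : Matrix ι κ ℝ)
    (h : ∀ y, 0 ≤ y → y ᵥ* M = 0 → y = 0) : ∃ z, ∀ i, 0 < (M *ᵥ z) i := by
  classical
  set S := (fun y => y ᵥ* M) '' stdSimplex ℝ ι
  have hS0 : (0 : κ → ℝ) ∉ S := by
    rintro ⟨y, ⟨hy0, hy1⟩, hyM⟩
    simp [h y hy0 hyM] at hy1
  have hSconv : Convex ℝ S := (convex_stdSimplex ℝ ι).linear_image (vecMulLinear M)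
  have hSclosed : IsClosed S := ((isCompact_stdSimplex ℝ ι).image (by fun_prop)).isClosed
  obtain ⟨f, u, hfu, hsep⟩ := geometric_hahn_banach_point_closed hSconv hSclosed hS0
  rw [map_zero] at hfu
  refine ⟨fun k => f (Pi.single k 1), fun i => ?_⟩
  calc 0 < f (M.row i) :=
        hfu.trans (hsep _ ⟨_, single_mem_stdSimplex ℝ i, single_one_vecMul i M⟩)
    _ = (M *ᵥ fun k => f (Pi.single k 1)) i := f.toLinearMap.apply_eq_dotProduct_single _

end Gordan

section Homogenization

variable {ι κ : Type*} [Fintype κ] [DecidableEq κ]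

def strictHomogenization (A : Matrix ι κ ℝ) (b : ι → ℝ) :
    Matrix (ι ⊕ (κ ⊕ Unit)) (κ ⊕ Unit) ℝ :=
  fromRows (fromCols (-A) (replicateCol Unit b)) 1

theorem strictHomogenization_mulVec (A : Matrix ι κ ℝ) (b : ι → ℝ) (z : κ ⊕ Unit → ℝ) :
    strictHomogenization A b *ᵥ z = Sum.elim (z (Sum.inr ()) • b - A *ᵥ (z ∘ Sum.inl)) z := by
  ext (i | _)
  · simp [strictHomogenization, mulVec, dotProduct, replicateCol, mul_comm, sub_eq_neg_add]
  · simp [strictHomogenization]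

theorem vecMul_strictHomogenization [Fintype ι] (A : Matrix ι κ ℝ) (b : ι → ℝ)
    (y : ι ⊕ (κ ⊕ Unit) → ℝ) :
    y ᵥ* strictHomogenization A b =
      y ∘ Sum.inr + Sum.elim (-(y ∘ Sum.inl ᵥ* A)) fun _ => y ∘ Sum.inl ⬝ᵥ b := by
  ext (j | _)
  · simp [strictHomogenization, vecMul_neg, add_comm]
  · simp [strictHomogenization, vecMul, dotProduct, replicateCol, add_comm]

theorem eq_zero_of_vecMul_strictHomogenization_eq_zero [Fintype ι] {A : Matrix ι κ ℝ}
    {b : ι → ℝ} (hdual : ∀ lam : ι → ℝ, 0 ≤ lam → 0 ≤ Aᵀ *ᵥ lam → b ⬝ᵥ lam ≤ 0 → lam = 0)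
    {y : ι ⊕ (κ ⊕ Unit) → ℝ} (hy : 0 ≤ y) (hyH : y ᵥ* strictHomogenization A b = 0) :
    y = 0 := by
  rw [vecMul_strictHomogenization] at hyH
  have hx (j : κ) : (y ∘ Sum.inl ᵥ* A) j = y (Sum.inr (Sum.inl j)) := by
    have := congrFun hyH (Sum.inl j)
    simp only [Pi.add_apply, Function.comp_apply, Sum.elim_inl, Pi.neg_apply,
      Pi.zero_apply] at this
    linarith
  have ht : b ⬝ᵥ y ∘ Sum.inl = -y (Sum.inr (Sum.inr ())) := by
    rw [dotProduct_comm, eq_neg_iff_add_eq_zero, add_comm]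
    simpa using congrFun hyH (Sum.inr ())
  have hlam : y ∘ Sum.inl = 0 := hdual _ (fun i => hy _)
    (fun j => by rw [mulVec_transpose, hx]; exact hy _) (by rw [ht, neg_nonpos]; exact hy _)
  ext (i | j | _)
  · exact congrFun hlam i
  · simp [← hx, hlam]
  · simpa [hlam] using ht.symm

theorem exists_strict_of_mulVec_strictHomogenization_pos {A : Matrix ι κ ℝ} {b : ι → ℝ}
    {z : κ ⊕ Unit → ℝ} (hz : ∀ r, 0 < (strictHomogenization A b *ᵥ z) r) :
    ∃ x : κ → ℝ, (∀ i, (A *ᵥ x) i < b i) ∧ ∀ j, 0 < x j := by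
  simp only [strictHomogenization_mulVec, Sum.forall, Sum.elim_inl, Sum.elim_inr,
    Pi.sub_apply, Pi.smul_apply, smul_eq_mul, sub_pos] at hz
  obtain ⟨hrows, hx, ht⟩ := hz
  refine ⟨(z (Sum.inr ()))⁻¹ • (z ∘ Sum.inl), fun i => ?_, fun j => ?_⟩
  · rw [mulVec_smul, Pi.smul_apply, smul_eq_mul, inv_mul_lt_iff₀ (ht ())]
    exact hrows i
  · exact mul_pos (inv_pos.2 (ht ())) (hx j)

end Homogenization

/-- Converse: if the only dual point `λ ≥ 0`, `Aᵀλ ≥ 0`, `bᵀλ ≤ 0` is `λ = 0`, then the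
primal has a strict (full-dimensional) solution. -/
theorem stmt_9 {m n : ℕ} (A : Matrix (Fin m) (Fin n) ℝ) (b : Fin m → ℝ)
    (hdual : ∀ lam : Fin m → ℝ, 0 ≤ lam → 0 ≤ Aᵀ.mulVec lam → b ⬝ᵥ lam ≤ 0 →
      lam = 0) :
    ∃ x : Fin n → ℝ, (∀ i, A.mulVec x i < b i) ∧ (∀ j, 0 < x j) := by
  obtain ⟨z, hz⟩ := (strictHomogenization A b).exists_mulVec_pos_of_vecMul_eq_zero
    fun _ hy hyH => eq_zero_of_vecMul_strictHomogenization_eq_zero hdual hy hyH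
  exact exists_strict_of_mulVec_strictHomogenization_pos hz
end

section
/- Transfer of multipliers under Gaussian elimination: let a homogeneous system of inequalities in variables x_0, x_1, …, x_n have constraints x_0 + (1/a_0)L_0 ≤ 0 (pivot, a_0 > 0), x_0 + (1/a_i)L_i ≤ 0, -x_0 + (1/a_j)L_j ≤ 0, L_k ≤ 0, -x_0 ≤ 0, -x_p ≤ 0, and suppose nonnegative multipliers μ_0, μ_i, μ_j, μ_k, s_0, s_p give the identically zero linear combination (so Σ of multipliers times left-hand sides is the zero functional). Then substituting x_0 = -(1/a_0)L_0 yields the system {-(1/a_0)L_0 + (1/a_i)L_i ≤ 0, (1/a_0)L_0 + (1/a_j)L_j ≤ 0, L_k ≤ 0, (1/a_0)L_0 ≤ 0, -x_p ≤ 0} which admits the nonnegative multipliers {a_iμ_i, a_jμ_j, μ_k, s_0, s_p} giving the identically zero combination, and moreover a_0μ_0 = -Σ_i a_iμ_i + Σ_j a_jμ_j + s_0. -/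
/-- Transfer of multipliers under Gaussian elimination of the variable `x₀` using the
pivot constraint `a₀·x₀ + L₀ ≤ 0` (treated as equality `x₀ = -(1/a₀)·L₀`).
The variables of the system are `(x₀, x) : ℝ × (Fin n → ℝ)`; `L₀, Li, Lj, Lk` are
linear functionals in `x` only.  If nonnegative multipliers `μ₀, μi, μj, μk, s₀, sp`
give the identically zero combination of the left-hand sides of the original system,
then the eliminated system admits the nonnegative multipliers
`{aᵢμᵢ, aⱼμⱼ, μₖ, s₀, s_p}` giving the identically zero combination, and
`a₀μ₀ = -Σᵢ aᵢμᵢ + Σⱼ aⱼμⱼ + s₀`. -/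
theorem stmt_13 {n : ℕ} {I J K : Type*} [Fintype I] [Fintype J] [Fintype K]
    (L0 : (Fin n → ℝ) →ₗ[ℝ] ℝ) (Li : I → ((Fin n → ℝ) →ₗ[ℝ] ℝ))
    (Lj : J → ((Fin n → ℝ) →ₗ[ℝ] ℝ)) (Lk : K → ((Fin n → ℝ) →ₗ[ℝ] ℝ))
    (a0 : ℝ) (ai : I → ℝ) (aj : J → ℝ)
    (ha0 : 0 < a0) (hai : ∀ i, 0 < ai i) (haj : ∀ j, 0 < aj j)
    (mu0 : ℝ) (mui : I → ℝ) (muj : J → ℝ) (muk : K → ℝ) (s0 : ℝ) (sp : Fin n → ℝ)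
    (hmu0 : 0 ≤ mu0) (hmui : ∀ i, 0 ≤ mui i) (hmuj : ∀ j, 0 ≤ muj j)
    (hmuk : ∀ k, 0 ≤ muk k) (hs0 : 0 ≤ s0) (hsp : ∀ p, 0 ≤ sp p)
    -- the multipliers give the identically zero combination on the original system
    (hzero : ∀ (x0 : ℝ) (x : Fin n → ℝ),
      mu0 * (a0 * x0 + L0 x)
        + (∑ i, mui i * (ai i * x0 + Li i x))
        + (∑ j, muj j * (-(aj j) * x0 + Lj j x))
        + (∑ k, muk k * Lk k x)
        + s0 * (-x0)
        + (∑ p, sp p * (-(x p))) = 0) :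
    -- the transferred multipliers give the identically zero combination on the new system
    (∀ x : Fin n → ℝ,
      (∑ i, (ai i * mui i) * (-(1 / a0) * L0 x + (1 / ai i) * Li i x))
        + (∑ j, (aj j * muj j) * ((1 / a0) * L0 x + (1 / aj j) * Lj j x))
        + (∑ k, muk k * Lk k x)
        + s0 * ((1 / a0) * L0 x)
        + (∑ p, sp p * (-(x p))) = 0)
    ∧ a0 * mu0 = -(∑ i, ai i * mui i) + (∑ j, aj j * muj j) + s0 := by
  constructor
  · intro x
    have h := hzero (-(1 / a0) * L0 x) x
    have hi : ∀ i, (ai i * mui i) * (-(1 / a0) * L0 x + (1 / ai i) * Li i x)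
        = mui i * (ai i * (-(1 / a0) * L0 x) + Li i x) := by
      intro i
      have : (ai i) ≠ 0 := (hai i).ne'
      field_simp
    have hj : ∀ j, (aj j * muj j) * ((1 / a0) * L0 x + (1 / aj j) * Lj j x)
        = muj j * (-(aj j) * (-(1 / a0) * L0 x) + Lj j x) := by
      intro j
      have : (aj j) ≠ 0 := (haj j).ne'
      field_simp
    have h0 : a0 * (-(1 / a0) * L0 x) + L0 x = 0 := by
      field_simp
      ring
    simp only [Finset.sum_congr rfl (fun i _ => hi i),
      Finset.sum_congr rfl (fun j _ => hj j)]
    calc (∑ i, mui i * (ai i * (-(1 / a0) * L0 x) + Li i x))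
          + (∑ j, muj j * (-(aj j) * (-(1 / a0) * L0 x) + Lj j x))
          + (∑ k, muk k * Lk k x)
          + s0 * ((1 / a0) * L0 x)
          + (∑ p, sp p * (-(x p)))
        = mu0 * (a0 * (-(1 / a0) * L0 x) + L0 x)
          + (∑ i, mui i * (ai i * (-(1 / a0) * L0 x) + Li i x))
          + (∑ j, muj j * (-(aj j) * (-(1 / a0) * L0 x) + Lj j x))
          + (∑ k, muk k * Lk k x)
          + s0 * (-(-(1 / a0) * L0 x))
          + (∑ p, sp p * (-(x p))) := by rw [h0]; ring
      _ = 0 := h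
  · have h := hzero 1 0
    simp only [map_zero, mul_zero, mul_one, add_zero, Pi.zero_apply, neg_zero,
      Finset.sum_const_zero] at h
    have h1 : ∑ i, mui i * ai i = ∑ i, ai i * mui i :=
      Finset.sum_congr rfl (fun i _ => mul_comm _ _)
    have h2 : ∑ j, muj j * -aj j = -∑ j, aj j * muj j := by
      rw [← Finset.sum_neg_distrib]
      exact Finset.sum_congr rfl (fun j _ => by ring)
    linarith
end

section
/- If a system S of linear inequalities L_i(x) ≤ r_i has no solution, then S admits nonnegative multipliers λ_i, not all zero, with Σ λ_i L_i = 0 and Σ λ_i r_i ≤ 0; consequently, adjoining the tautology 0 ≤ 1 with an appropriate multiplier, the augmented system has nonnegative multipliers, not all zero, with Σ λ_i L_i = 0 and Σ λ_i r_i = 0. -/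
/-!
Farkas' lemma, proved geometrically. Let `T x = (Lᵢ x)ᵢ`. The system `T x ≤ r` is unsolvable
exactly when `r` lies outside the cone `range T + (ι → ℝ≥0)`. This cone is finitely generated,
hence closed (conic Carathéodory: every point of it lies in the cone over a linearly independent
set of generators, which is the image of an orthant under an injective linear map), so a
continuous functional `f` separates `r` from it. Then `λᵢ = f (eᵢ) ≥ 0`, `f ∘ T = 0` says
`∑ λᵢ Lᵢ = 0`, and `f r < 0` says `∑ λᵢ rᵢ < 0`. Adjoining `0 ≤ 1` with multiplier
`-∑ λᵢ rᵢ` makes the right-hand side vanish.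
-/

open Finset

section

variable {E : Type*} [AddCommGroup E] [Module ℝ E]

theorem exists_sum_smul_eq_zero_pos_of_not_linearIndepOn {s : Finset E}
    (h : ¬ LinearIndepOn ℝ id (s : Set E)) :
    ∃ g : E → ℝ, ∑ a ∈ s, g a • a = 0 ∧ ∃ a ∈ s, 0 < g a := by
  simp only [linearIndepOn_iff'', not_forall, id] at h
  obtain ⟨t, g, hts, hg, hsum, a, hat, hga⟩ := h
  have hsum' : ∑ b ∈ s, g b • b = 0 := by
    rw [← sum_subset (coe_subset.mp hts) fun b _ hb => by rw [hg b hb, zero_smul], hsum]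
  rcases Ne.lt_or_gt hga with hneg | hpos
  · exact ⟨-g, by simp [hsum'], a, coe_subset.mp hts hat, by simpa using hneg⟩
  · exact ⟨g, hsum', a, coe_subset.mp hts hat, hpos⟩

namespace PointedCone

theorem mem_hull_finset_iff {s : Finset E} {x : E} :
    x ∈ hull ℝ (s : Set E) ↔ ∃ c : E → ℝ, (∀ a ∈ s, 0 ≤ c a) ∧ ∑ a ∈ s, c a • a = x := by
  constructor
  · rintro hx
    obtain ⟨c, -, rfl⟩ := Submodule.mem_span_finset.mp hx
    exact ⟨fun a => c a, fun a _ => (c a).2, rfl⟩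
  · rintro ⟨c, hc, rfl⟩
    exact sum_mem fun a ha => (hull ℝ (s : Set E)).smul_mem (hc a ha) (subset_hull ha)

theorem mem_hull_erase [DecidableEq E] {s : Finset E} (h : ¬ LinearIndepOn ℝ id (s : Set E))
    {x : E} (hx : x ∈ hull ℝ (s : Set E)) : ∃ y ∈ s, x ∈ hull ℝ (s.erase y : Set E) := by
  obtain ⟨c, hc, rfl⟩ := mem_hull_finset_iff.mp hx
  obtain ⟨g, hg, a, has, hga⟩ := exists_sum_smul_eq_zero_pos_of_not_linearIndepOn h
  -- Move along the relation `g` until the first coefficient of `c` drops to zero.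
  obtain ⟨y, hyP, hymin⟩ := (s.filter (0 < g ·)).exists_min_image (fun b => c b / g b)
    ⟨a, mem_filter.mpr ⟨has, hga⟩⟩
  obtain ⟨hys, hgy⟩ := mem_filter.mp hyP
  set τ := c y / g y
  have hτ : 0 ≤ τ := div_nonneg (hc y hys) hgy.le
  refine ⟨y, hys, mem_hull_finset_iff.mpr ⟨fun b => c b - τ * g b, fun b hb => ?_, ?_⟩⟩
  · have hbs := mem_of_mem_erase hb
    rcases lt_or_ge 0 (g b) with hgb | hgb
    · linarith [(le_div_iff₀ hgb).mp (hymin b (mem_filter.mpr ⟨hbs, hgb⟩))]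
    · nlinarith [hc b hbs]
  · have hτy : c y - τ * g y = 0 := by simp [τ, hgy.ne']
    rw [sum_erase _ (by simp only [hτy, zero_smul])]
    simp only [sub_smul, mul_smul, sum_sub_distrib, ← smul_sum, hg, smul_zero, sub_zero]

theorem exists_linearIndepOn_subset_of_mem_hull [DecidableEq E] {s : Finset E} {x : E}
    (hx : x ∈ hull ℝ (s : Set E)) :
    ∃ t ⊆ s, LinearIndepOn ℝ id (t : Set E) ∧ x ∈ hull ℝ (t : Set E) := by
  induction s using Finset.strongInduction with
  | H s ih =>
    by_cases hs : LinearIndepOn ℝ id (s : Set E)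
    · exact ⟨s, subset_rfl, hs, hx⟩
    · obtain ⟨y, hys, hxy⟩ := mem_hull_erase hs hx
      obtain ⟨t, hts, ht, hxt⟩ := ih _ (erase_ssubset hys) hxy
      exact ⟨t, hts.trans (erase_subset y s), ht, hxt⟩

variable [TopologicalSpace E] [IsTopologicalAddGroup E] [ContinuousSMul ℝ E] [T2Space E]

theorem isClosed_hull_of_linearIndepOn {s : Finset E} (hs : LinearIndepOn ℝ id (s : Set E)) :
    IsClosed (hull ℝ (s : Set E) : Set E) := by
  let φ := Fintype.linearCombination ℝ (Subtype.val : s → E)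
  have hφ : Topology.IsClosedEmbedding φ := LinearMap.isClosedEmbedding_of_injective <|
    LinearMap.ker_eq_bot.mpr hs.fintypeLinearCombination_injective
  have himage : (hull ℝ (s : Set E) : Set E) = φ '' Set.Ici 0 := by
    ext x
    constructor
    · intro hx
      obtain ⟨c, rfl⟩ := Submodule.mem_span_finset'.mp hx
      exact ⟨fun a => c a, fun a => (c a).2, rfl⟩
    · rintro ⟨c, hc, rfl⟩
      exact sum_mem fun a _ => (hull ℝ (s : Set E)).smul_mem (hc a) (subset_hull a.2)
  rw [himage]
  exact hφ.isClosedMap _ isClosed_Ici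

theorem isClosed_hull_of_finite {s : Set E} (hs : s.Finite) :
    IsClosed (hull ℝ s : Set E) := by
  classical
  have : (hull ℝ s : Set E) =
      ⋃ t ∈ ({t ∈ hs.toFinset.powerset | LinearIndepOn ℝ id (t : Set E)} : Finset (Finset E)),
        (hull ℝ (t : Set E) : Set E) := by
    ext x
    simp only [Set.mem_iUnion, mem_filter, mem_powerset, SetLike.mem_coe]
    constructor
    · intro hx
      rw [← hs.coe_toFinset] at hx
      obtain ⟨t, hts, ht, hxt⟩ := exists_linearIndepOn_subset_of_mem_hull hx
      exact ⟨t, ⟨hts, ht⟩, hxt⟩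
    · rintro ⟨t, ⟨hts, -⟩, hxt⟩
      exact Submodule.span_mono (by simpa using hts) hxt
  rw [this]
  exact isClosed_biUnion_finset fun t ht => isClosed_hull_of_linearIndepOn (mem_filter.mp ht).2

theorem exists_strongDual_nonneg_of_notMem_hull [LocallyConvexSpace ℝ E] {s : Set E}
    (hs : s.Finite) {x : E} (hx : x ∉ hull ℝ s) :
    ∃ f : StrongDual ℝ E, (∀ y ∈ s, 0 ≤ f y) ∧ f x < 0 := by
  obtain ⟨f, hf, hfx⟩ := ProperCone.hyperplane_separation_point
    { toSubmodule := hull ℝ s, isClosed' := isClosed_hull_of_finite hs } hx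
  exact ⟨f, fun y hy => hf y (subset_hull hy), hfx⟩

end PointedCone

end

theorem LinearMap.apply_eq_sum_mul_apply_single {ι : Type*} [Fintype ι] [DecidableEq ι]
    (f : (ι → ℝ) →ₗ[ℝ] ℝ) (v : ι → ℝ) : f v = ∑ i, v i * f (Pi.single i 1) := by
  conv_lhs => rw [← Finset.univ_sum_single v, map_sum]
  refine sum_congr rfl fun i _ => ?_
  rw [← smul_eq_mul, ← map_smul, ← Pi.single_smul', smul_eq_mul, mul_one]

-- The cone generated here is `range T + (ι → ℝ≥0)`.
theorem notMem_hull_of_not_exists_le {V ι : Type*} [AddCommGroup V] [Module ℝ V] [DecidableEq ι]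
    (T : V →ₗ[ℝ] ι → ℝ) {S : Set (ι → ℝ)} (hS : Submodule.span ℝ S = LinearMap.range T)
    {r : ι → ℝ} (h : ¬ ∃ x, T x ≤ r) :
    r ∉ PointedCone.hull ℝ ((S ∪ -S) ∪ Set.range fun i => Pi.single i 1) := by
  intro hr
  unfold PointedCone.hull at hr
  rw [Submodule.span_union, Submodule.mem_sup] at hr
  obtain ⟨u, hu, v, hv, rfl⟩ := hr
  have hST : S ⊆ LinearMap.range T := hS ▸ Submodule.subset_span
  have hu : u ∈ LinearMap.range T := by
    refine (Submodule.span_le (p := PointedCone.ofSubmodule (LinearMap.range T))).mpr ?_ hu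
    rintro y (hy | hy)
    · exact hST hy
    · simpa using (LinearMap.range T).neg_mem (hST hy)
  have hv : 0 ≤ v := by
    refine (Submodule.span_le (p := PointedCone.positive ℝ (ι → ℝ))).mpr ?_ hv
    rintro _ ⟨i, rfl⟩
    exact Pi.single_nonneg.mpr zero_le_one
  obtain ⟨x, rfl⟩ := hu
  exact h ⟨x, le_add_of_nonneg_right hv⟩

theorem exists_nonneg_sum_smul_eq_zero_of_not_exists_le {V ι : Type*} [AddCommGroup V]
    [Module ℝ V] [Fintype ι] (L : ι → V →ₗ[ℝ] ℝ) (r : ι → ℝ)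
    (h : ¬ ∃ x : V, ∀ i, L i x ≤ r i) :
    ∃ lam : ι → ℝ, 0 ≤ lam ∧ ∑ i, lam i • L i = 0 ∧ ∑ i, lam i * r i < 0 := by
  classical
  let T : V →ₗ[ℝ] ι → ℝ := LinearMap.pi L
  obtain ⟨S, hS, hST⟩ := Submodule.fg_def.mp (IsNoetherian.noetherian (LinearMap.range T))
  obtain ⟨f, hfG, hfr⟩ := PointedCone.exists_strongDual_nonneg_of_notMem_hull
    ((hS.union hS.neg).union (Set.finite_range _)) (notMem_hull_of_not_exists_le T hST h)
  have hfT : ∀ x, f (T x) = 0 := by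
    have : LinearMap.range T ≤ LinearMap.ker (f : (ι → ℝ) →ₗ[ℝ] ℝ) := by
      rw [← hST, Submodule.span_le]
      intro y hy
      exact le_antisymm (by simpa using hfG (-y) (Or.inl (Or.inr (by simpa using hy))))
        (hfG y (Or.inl (Or.inl hy)))
    exact fun x => this (LinearMap.mem_range_self T x)
  have hf : ∀ v, f v = ∑ i, v i * f (Pi.single i 1) :=
    LinearMap.apply_eq_sum_mul_apply_single (f : (ι → ℝ) →ₗ[ℝ] ℝ)
  refine ⟨fun i => f (Pi.single i 1), fun i => hfG _ (Or.inr ⟨i, rfl⟩), ?_, ?_⟩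
  · ext x
    simpa [hf (T x), T, mul_comm] using hfT x
  · simpa [← hf, mul_comm] using hfr

/-- If a finite system of linear inequalities has no solution, it admits nonnegative
multipliers, not all zero, combining to the zero functional with nonpositive right-hand
side; and, adjoining the tautology `0 ≤ 1` with a suitable multiplier, nonnegative
multipliers, not all zero, with zero combination and zero right-hand side. -/
theorem stmt_14 {n : ℕ} {ι : Type*} [Fintype ι]
    (L : ι → ((Fin n → ℝ) →ₗ[ℝ] ℝ)) (r : ι → ℝ)
    (hunsolv : ¬ ∃ x : Fin n → ℝ, ∀ i, L i x ≤ r i) :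
    (∃ lam : ι → ℝ, (∀ i, 0 ≤ lam i) ∧ lam ≠ 0 ∧
      ∑ i, lam i • L i = 0 ∧ ∑ i, lam i * r i ≤ 0) ∧
    (∃ (lam : ι → ℝ) (mu : ℝ), (∀ i, 0 ≤ lam i) ∧ 0 ≤ mu ∧
      (lam ≠ 0 ∨ mu ≠ 0) ∧
      ∑ i, lam i • L i = 0 ∧ (∑ i, lam i * r i) + mu * 1 = 0) := by
  obtain ⟨lam, hlam, hsum, hr⟩ := exists_nonneg_sum_smul_eq_zero_of_not_exists_le L r hunsolv
  have hne : lam ≠ 0 := by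
    rintro rfl
    simp at hr
  exact ⟨⟨lam, hlam, hne, hsum, hr.le⟩,
    ⟨lam, -∑ i, lam i * r i, hlam, by linarith, Or.inl hne, hsum, by ring⟩⟩
end
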